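/- Let Σ = {a, b, c} with independence relation given exactly by a I b (and b I a), and let E = a✶b✶c(ab)✶(a✶ + b✶) + (ab)✶(a✶ + b✶)ca✶b✶. Then the language ⟦E⟧ has rank at most 2. -/

import Mathlib

/-!
Every word of the language has the form `x c y` with `x`, `y` words over `{a, b}`. If `u v` is
trace equivalent to such a word, the letter `c` lies in `u` or in `v` and all other letters are
`a`'s and `b`'s. Using `a I b`, every word over `{a, b}` is equivalent both to a sorted word
`aᵖ bᵠ` and to a word of `(ab)∗(a∗ + b∗)`. If `c` lies in `v = x c y`, write `u ∼ aᵖ bᵠ`,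
`x ∼ aʳ bˢ`, `y ∼ w ∈ (ab)∗(a∗ + b∗)` and take `z = aᵖ aʳ bᵠ bˢ c w ∈ a∗b∗c(ab)∗(a∗ + b∗)`:
the two blocks `aᵖ` and `bᵠ` of `u` are separated by `aʳ`, which commutes with `bᵠ`. If `c` lies
in `u = x c y`, the witness `w c aᵖ aʳ bᵠ bˢ` of the second summand works in the same way.
-/

open RegularExpression
open scoped Classical

universe u

variable {α : Type u}

/-- Two words are independent if every letter of the first is independent
of every letter of the second. -/
def WIndep (I : α → α → Prop) (u v : List α) : Prop :=
  ∀ a ∈ u, ∀ b ∈ v, I a b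

/-- Trace equivalence: the least equivalence relation on words containing
all pairs (x ++ [a,b] ++ y, x ++ [b,a] ++ y) with a I b. -/
inductive TrEq (I : α → α → Prop) : List α → List α → Prop
  | swap (x y : List α) {a b : α} : I a b → TrEq I (x ++ [a, b] ++ y) (x ++ [b, a] ++ y)
  | refl (u : List α) : TrEq I u u
  | symm {u v : List α} : TrEq I u v → TrEq I v u
  | trans {u v w : List α} : TrEq I u v → TrEq I v w → TrEq I u w

/-- Trace closure of a language. -/
def TrClosure (I : α → α → Prop) (L : Set (List α)) : Set (List α) :=
  {w | ∃ z ∈ L, TrEq I w z}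

/-- u ⊲ z ⊳ v with exactly n blocks of u: there are nonempty words u₁,…,uₙ and
words v₀,…,vₙ (with v₁,…,v_{n-1} nonempty) such that u = u₁⋯uₙ, v = v₀⋯vₙ,
z = v₀u₁v₁⋯uₙvₙ and vⱼ I uᵢ whenever j < i. -/
def ScatN (I : α → α → Prop) (n : ℕ) (u z v : List α) : Prop :=
  ∃ us vs : ℕ → List α,
    (∀ i, 1 ≤ i → i ≤ n → us i ≠ []) ∧
    (∀ j, 1 ≤ j → j ≤ n - 1 → vs j ≠ []) ∧
    u = ((List.range n).map (fun i => us (i + 1))).flatten ∧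
    v = ((List.range (n + 1)).map vs).flatten ∧
    z = vs 0 ++ ((List.range n).map (fun i => us (i + 1) ++ vs (i + 1))).flatten ∧
    (∀ i j, 1 ≤ i → i ≤ n → j < i → WIndep I (vs j) (us i))

/-- u ⊲ z ⊳ v -/
def Scat (I : α → α → Prop) (u z v : List α) : Prop :=
  ∃ n, ScatN I n u z v

/-- u ∼⊲ z ⊳ v -/
def EqScat (I : α → α → Prop) (u z v : List α) : Prop :=
  ∃ u', TrEq I u u' ∧ Scat I u' z v

/-- u ∼⊲ z ⊳∼ v -/
def EqScatEq (I : α → α → Prop) (u z v : List α) : Prop :=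
  ∃ u' v', TrEq I u u' ∧ Scat I u' z v' ∧ TrEq I v' v

/-- u ∼⊲_N z ⊳∼ v : as EqScatEq, with the number of blocks bounded by N -/
def EqScatEqLe (I : α → α → Prop) (N : ℕ) (u z v : List α) : Prop :=
  ∃ u' v', TrEq I u u' ∧ (∃ n ≤ N, ScatN I n u' z v') ∧ TrEq I v' v

/-- Reordering concatenation of words. -/
def rconc (I : α → α → Prop) : List α → List α → Set (List α)
  | [], v => {v}
  | a :: u, [] => {a :: u}
  | a :: u, b :: v =>
      (List.cons a) '' rconc I u (b :: v) ∪
      {z | WIndep I (a :: u) [b] ∧ ∃ w ∈ rconc I (a :: u) v, z = b :: w}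
termination_by u v => u.length + v.length

/-- Reordering concatenation lifted to languages. -/
def rconcL (I : α → α → Prop) (L L' : Set (List α)) : Set (List α) :=
  {z | ∃ u ∈ L, ∃ v ∈ L', z ∈ rconc I u v}

/-- The reorderable part of a language w.r.t. a word. -/
def RPart (I : α → α → Prop) (u : List α) (L : Set (List α)) : Set (List α) :=
  {v ∈ L | WIndep I v u}

/-- The reordering derivative of a language along a word. -/
def RDeriv (I : α → α → Prop) (u : List α) (L : Set (List α)) : Set (List α) :=
  {v | ∃ z ∈ L, EqScat I u z v}

/-- Syntactic reorderable part of a regexp w.r.t. a letter. -/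
noncomputable def Rexp (I : α → α → Prop) (a : α) : RegularExpression α → RegularExpression α
  | zero => zero
  | epsilon => epsilon
  | char b => if I a b then char b else zero
  | plus E F => plus (Rexp I a E) (Rexp I a F)
  | comp E F => comp (Rexp I a E) (Rexp I a F)
  | RegularExpression.star E => star (Rexp I a E)

/-- Brzozowski reordering derivative of a regexp along a letter. -/
noncomputable def Dexp (I : α → α → Prop) (a : α) : RegularExpression α → RegularExpression α
  | zero => zero
  | epsilon => zero
  | char b => if a = b then epsilon else zero
  | plus E F => plus (Dexp I a E) (Dexp I a F)
  | comp E F => plus (comp (Dexp I a E) F) (comp (Rexp I a E) (Dexp I a F))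
  | RegularExpression.star E => comp (star (Rexp I a E)) (comp (Dexp I a E) (star E))

/-- Syntactic reorderable part along a word. -/
noncomputable def RexpW (I : α → α → Prop) (u : List α) (E : RegularExpression α) :
    RegularExpression α :=
  u.foldl (fun E a => Rexp I a E) E

/-- Brzozowski reordering derivative along a word. -/
noncomputable def DexpW (I : α → α → Prop) (u : List α) (E : RegularExpression α) :
    RegularExpression α :=
  u.foldl (fun E a => Dexp I a E) E

/-- Antimirov reordering parts-of-derivatives along a letter. -/
inductive Antim (I : α → α → Prop) : RegularExpression α → α → RegularExpression α → Prop
  | chr (a : α) : Antim I (char a) a epsilon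
  | plusL {E F : RegularExpression α} {a E'} : Antim I E a E' → Antim I (plus E F) a E'
  | plusR {E F : RegularExpression α} {a F'} : Antim I F a F' → Antim I (plus E F) a F'
  | compL {E F : RegularExpression α} {a E'} : Antim I E a E' → Antim I (comp E F) a (comp E' F)
  | compR {E F : RegularExpression α} {a F'} :
      Antim I F a F' → Antim I (comp E F) a (comp (Rexp I a E) F')
  | st {E : RegularExpression α} {a E'} :
      Antim I E a E' → Antim I (star E) a (comp (star (Rexp I a E)) (comp E' (star E)))

/-- Antimirov reordering parts-of-derivatives along a word. -/
inductive AntimW (I : α → α → Prop) : RegularExpression α → List α → RegularExpression α → Prop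
  | nil (E : RegularExpression α) : AntimW I E [] E
  | snoc {E : RegularExpression α} {u E' a E''} :
      AntimW I E u E' → Antim I E' a E'' → AntimW I E (u ++ [a]) E''

/-- The dependence graph of a word: vertices are positions; distinct positions
are adjacent when their letters are not independent. -/
def depGraph (I : α → α → Prop) (w : List α) : SimpleGraph (Fin w.length) where
  Adj i j := i ≠ j ∧ ¬(I (w.get i) (w.get j) ∧ I (w.get j) (w.get i))
  symm := by
    constructor
    intro i j h
    exact ⟨h.1.symm, fun hc => h.2 ⟨hc.2, hc.1⟩⟩
  loopless := by
    constructor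
    intro i h
    exact h.1 rfl

/-- A word is connected if its dependence graph is connected. -/
def WordConnected (I : α → α → Prop) (w : List α) : Prop :=
  (depGraph I w).Preconnected

/-- Least fixed point star for the trace-closing semantics. -/
def starI (I : α → α → Prop) (L : Set (List α)) : Set (List α) :=
  sInf {X | {([] : List α)} ∪ rconcL I L X ⊆ X}

/-- Trace-closing semantics of regular expressions. -/
def langI (I : α → α → Prop) : RegularExpression α → Set (List α)
  | zero => ∅
  | epsilon => {[]}
  | char a => {[a]}
  | plus E F => langI I E ∪ langI I F
  | comp E F => rconcL I (langI I E) (langI I F)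
  | RegularExpression.star E => starI I (langI I E)

/-- L has (scattering) rank at most N. -/
def HasRankLe (I : α → α → Prop) (L : Set (List α)) (N : ℕ) : Prop :=
  ∀ u v, u ++ v ∈ TrClosure I L → ∃ z ∈ L, EqScatEqLe I N u z v

/-- L has uniform (scattering) rank at most N. -/
def HasUniformRankLe (I : α → α → Prop) (L : Set (List α)) (N : ℕ) : Prop :=
  ∀ w ∈ TrClosure I L, ∃ z ∈ L, ∀ u v, w = u ++ v → EqScatEqLe I N u z v

/-- Star-connected regular expressions. -/
inductive StarConnected (I : α → α → Prop) : RegularExpression α → Prop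
  | zero : StarConnected I zero
  | epsilon : StarConnected I epsilon
  | chr (a : α) : StarConnected I (char a)
  | plus {E F : RegularExpression α} :
      StarConnected I E → StarConnected I F → StarConnected I (plus E F)
  | comp {E F : RegularExpression α} :
      StarConnected I E → StarConnected I F → StarConnected I (comp E F)
  | st {E : RegularExpression α} :
      StarConnected I E → (∀ w ∈ E.matches', WordConnected I w) → StarConnected I (star E)

/-- Refined Antimirov reordering parts-of-derivatives along a letter. -/
inductive RAntim (I : α → α → Prop) :
    RegularExpression α → α → RegularExpression α → RegularExpression α → Prop
  | chr (a : α) : RAntim I (char a) a epsilon epsilon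
  | plusL {E F : RegularExpression α} {a El Er} :
      RAntim I E a El Er → RAntim I (plus E F) a El Er
  | plusR {E F : RegularExpression α} {a Fl Fr} :
      RAntim I F a Fl Fr → RAntim I (plus E F) a Fl Fr
  | compL {E F : RegularExpression α} {a El Er} :
      RAntim I E a El Er → RAntim I (comp E F) a El (comp Er F)
  | compR {E F : RegularExpression α} {a Fl Fr} :
      RAntim I F a Fl Fr → RAntim I (comp E F) a (comp (Rexp I a E) Fl) Fr
  | st {E : RegularExpression α} {a El Er} :
      RAntim I E a El Er →
      RAntim I (star E) a (comp (star (Rexp I a E)) El) (comp Er (star E))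

/-- Refined Antimirov relation lifted to nonempty lists of regexps (unbounded). -/
inductive RAntimL (I : α → α → Prop) :
    List (RegularExpression α) → α → List (RegularExpression α) → Prop
  | split {Γ Δ : List (RegularExpression α)} {E : RegularExpression α} {a El Er} :
      RAntim I E a El Er →
      RAntimL I (Γ ++ E :: Δ) a (Γ.map (Rexp I a) ++ El :: Er :: Δ)
  | dropL {Γ Δ : List (RegularExpression α)} {E : RegularExpression α} {a El Er} :
      RAntim I E a El Er → [] ∈ El.matches' → Γ ≠ [] →
      RAntimL I (Γ ++ E :: Δ) a (Γ.map (Rexp I a) ++ Er :: Δ)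
  | dropR {Γ Δ : List (RegularExpression α)} {E : RegularExpression α} {a El Er} :
      RAntim I E a El Er → [] ∈ Er.matches' → Δ ≠ [] →
      RAntimL I (Γ ++ E :: Δ) a (Γ.map (Rexp I a) ++ El :: Δ)
  | dropBoth {Γ Δ : List (RegularExpression α)} {E : RegularExpression α} {a El Er} :
      RAntim I E a El Er → [] ∈ El.matches' → [] ∈ Er.matches' → Γ ≠ [] → Δ ≠ [] →
      RAntimL I (Γ ++ E :: Δ) a (Γ.map (Rexp I a) ++ Δ)

/-- Refined Antimirov relation along a word (unbounded). -/
inductive RAntimW (I : α → α → Prop) :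
    RegularExpression α → List α → List (RegularExpression α) → Prop
  | nil (E : RegularExpression α) : RAntimW I E [] [E]
  | snoc {E : RegularExpression α} {u Γ a Γ'} :
      RAntimW I E u Γ → RAntimL I Γ a Γ' → RAntimW I E (u ++ [a]) Γ'

/-- N-bounded refined Antimirov relation lifted to nonempty lists of regexps. -/
inductive RAntimLN (I : α → α → Prop) (N : ℕ) :
    List (RegularExpression α) → α → List (RegularExpression α) → Prop
  | split {Γ Δ : List (RegularExpression α)} {E : RegularExpression α} {a El Er} :
      RAntim I E a El Er → Γ.length + Δ.length < N →
      RAntimLN I N (Γ ++ E :: Δ) a (Γ.map (Rexp I a) ++ El :: Er :: Δ)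
  | dropL {Γ Δ : List (RegularExpression α)} {E : RegularExpression α} {a El Er} :
      RAntim I E a El Er → [] ∈ El.matches' → Γ ≠ [] →
      RAntimLN I N (Γ ++ E :: Δ) a (Γ.map (Rexp I a) ++ Er :: Δ)
  | dropR {Γ Δ : List (RegularExpression α)} {E : RegularExpression α} {a El Er} :
      RAntim I E a El Er → [] ∈ Er.matches' → Δ ≠ [] →
      RAntimLN I N (Γ ++ E :: Δ) a (Γ.map (Rexp I a) ++ El :: Δ)
  | dropBoth {Γ Δ : List (RegularExpression α)} {E : RegularExpression α} {a El Er} :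
      RAntim I E a El Er → [] ∈ El.matches' → [] ∈ Er.matches' → Γ ≠ [] → Δ ≠ [] →
      RAntimLN I N (Γ ++ E :: Δ) a (Γ.map (Rexp I a) ++ Δ)

/-- N-bounded refined Antimirov relation along a word. -/
inductive RAntimWN (I : α → α → Prop) (N : ℕ) :
    RegularExpression α → List α → List (RegularExpression α) → Prop
  | nil (E : RegularExpression α) : RAntimWN I N E [] [E]
  | snoc {E : RegularExpression α} {u Γ a Γ'} :
      RAntimWN I N E u Γ → RAntimLN I N Γ a Γ' → RAntimWN I N E (u ++ [a]) Γ'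

open Computability

namespace TrEq

variable {I : α → α → Prop}

theorem perm {u v : List α} (h : TrEq I u v) : u.Perm v := by
  induction h with
  | swap x y _ => exact ((List.Perm.swap _ _ []).append_left x).append_right y
  | refl u => exact List.Perm.refl u
  | symm _ ih => exact ih.symm
  | trans _ _ ih₁ ih₂ => exact ih₁.trans ih₂

theorem cons (a : α) {u v : List α} (h : TrEq I u v) : TrEq I (a :: u) (a :: v) := by
  induction h with
  | swap x y hab => exact swap (a :: x) y hab
  | refl u => exact refl _
  | symm _ ih => exact ih.symm
  | trans _ _ ih₁ ih₂ => exact ih₁.trans ih₂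

theorem append_left (w : List α) {u v : List α} (h : TrEq I u v) : TrEq I (w ++ u) (w ++ v) := by
  induction w with
  | nil => exact h
  | cons a w ih => exact ih.cons a

theorem append_right {u v : List α} (h : TrEq I u v) (w : List α) : TrEq I (u ++ w) (v ++ w) := by
  induction h with
  | swap x y hab => simpa using swap (I := I) x (y ++ w) hab
  | refl u => exact refl _
  | symm _ ih => exact ih.symm
  | trans _ _ ih₁ ih₂ => exact ih₁.trans ih₂

theorem append {u u' v v' : List α} (hu : TrEq I u u') (hv : TrEq I v v') :
    TrEq I (u ++ v) (u' ++ v') :=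
  (hu.append_right v).trans (hv.append_left u')

theorem append_cons {c : α} {l : List α} (h : ∀ x ∈ l, I x c) (t : List α) :
    TrEq I (l ++ c :: t) (c :: (l ++ t)) := by
  induction l with
  | nil => exact refl _
  | cons a l ih =>
    have hswap : TrEq I ([a, c] ++ (l ++ t)) ([c, a] ++ (l ++ t)) :=
      swap [] (l ++ t) (h a List.mem_cons_self)
    exact ((ih fun x hx => h x (List.mem_cons_of_mem a hx)).cons a).trans hswap

end TrEq

section Scattering

variable {I : α → α → Prop}

theorem scatN_zero (z : List α) : ScatN I 0 [] z z :=
  ⟨fun _ => [], fun _ => z, by omega, by omega, by simp, by simp, by simp, by omega⟩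

theorem scatN_one {u v₀ v₁ : List α} (hu : u ≠ []) (h : WIndep I v₀ u) :
    ScatN I 1 u (v₀ ++ u ++ v₁) (v₀ ++ v₁) := by
  refine ⟨fun _ => u, fun j => if j = 0 then v₀ else v₁, fun _ _ _ => hu, by omega,
    by simp, by simp [List.range_succ], by simp, ?_⟩
  intro i j _ _ hj
  simpa [show j = 0 by omega] using h

theorem scatN_two {u₁ u₂ v₁ v₂ : List α} (hu₁ : u₁ ≠ []) (hu₂ : u₂ ≠ []) (hv₁ : v₁ ≠ [])
    (h : WIndep I v₁ u₂) :
    ScatN I 2 (u₁ ++ u₂) (u₁ ++ v₁ ++ u₂ ++ v₂) (v₁ ++ v₂) := by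
  refine ⟨fun i => if i = 1 then u₁ else u₂,
    fun j => if j = 0 then [] else if j = 1 then v₁ else v₂, ?_, ?_,
    by simp [List.range_succ], by simp [List.range_succ], by simp [List.range_succ], ?_⟩
  · intro i _ _
    dsimp only
    split_ifs <;> assumption
  · intro j _ _
    simpa [show j = 1 by omega] using hv₁
  · intro i j _ _ _
    interval_cases i <;> interval_cases j <;> first | exact h | simp [WIndep]

theorem exists_scatN_le_two {u₁ u₂ v₁ v₂ : List α} (h : WIndep I v₁ u₂) :
    ∃ n ≤ 2, ScatN I n (u₁ ++ u₂) (u₁ ++ v₁ ++ u₂ ++ v₂) (v₁ ++ v₂) := by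
  have hnil : ∀ u, WIndep I ([] : List α) u := by simp [WIndep]
  rcases eq_or_ne u₂ [] with rfl | hu₂
  · rcases eq_or_ne u₁ [] with rfl | hu₁
    · exact ⟨0, by omega, by simpa using scatN_zero (v₁ ++ v₂)⟩
    · exact ⟨1, by omega, by simpa using scatN_one (v₁ := v₁ ++ v₂) hu₁ (hnil u₁)⟩
  rcases eq_or_ne v₁ [] with rfl | hv₁
  · exact ⟨1, by omega, by simpa using scatN_one (v₁ := v₂) (by simp [hu₂]) (hnil (u₁ ++ u₂))⟩
  rcases eq_or_ne u₁ [] with rfl | hu₁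
  · exact ⟨1, by omega, by simpa using scatN_one (v₁ := v₂) hu₂ h⟩
  · exact ⟨2, le_rfl, scatN_two hu₁ hu₂ hv₁ h⟩

theorem eqScatEqLe_two {u u₁ u₂ v v₁ v₂ : List α} (hu : TrEq I u (u₁ ++ u₂))
    (hv : TrEq I (v₁ ++ v₂) v) (h : WIndep I v₁ u₂) :
    EqScatEqLe I 2 u (u₁ ++ v₁ ++ u₂ ++ v₂) v :=
  ⟨_, _, hu, exists_scatN_le_two h, hv⟩

end Scattering

section TwoLetters

open List

variable {I : α → α → Prop} {a b : α}

theorem windep_replicate (hab : I a b) (m n : ℕ) : WIndep I (replicate m a) (replicate n b) := by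
  intro x hx y hy
  rw [eq_of_mem_replicate hx, eq_of_mem_replicate hy]
  exact hab

theorem exists_trEq_replicate_append_replicate (hab : I a b) {w : List α}
    (hw : ∀ t ∈ w, t = a ∨ t = b) : ∃ p q, TrEq I w (replicate p a ++ replicate q b) := by
  induction w with
  | nil => exact ⟨0, 0, TrEq.refl []⟩
  | cons t w ih =>
    obtain ⟨p, q, h⟩ := ih fun x hx => hw x (mem_cons_of_mem t hx)
    rcases hw t mem_cons_self with rfl | rfl
    · exact ⟨p + 1, q, h.cons t⟩
    · refine ⟨p, q + 1, (h.cons t).trans (TrEq.append_cons ?_ _).symm⟩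
      intro x hx
      rw [eq_of_mem_replicate hx]
      exact hab

end TwoLetters

section Languages

def sortedLang (a b : α) : Language α := {[a]}∗ * {[b]}∗

def altLang (a b : α) : Language α := ({[a]} * {[b]})∗ * ({[a]}∗ + {[b]}∗)

variable {a b : α}

theorem replicate_mem_kstar_singleton (a : α) (n : ℕ) :
    List.replicate n a ∈ ({[a]} : Language α)∗ :=
  Language.mem_kstar.2 ⟨List.replicate n [a], by simp,
    fun y hy => by rw [List.eq_of_mem_replicate hy]; rfl⟩

theorem replicate_append_replicate_mem_sortedLang (m n : ℕ) :
    List.replicate m a ++ List.replicate n b ∈ sortedLang a b :=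
  Language.append_mem_mul (replicate_mem_kstar_singleton a m) (replicate_mem_kstar_singleton b n)

theorem forall_mem_of_mem_kstar {w : List α} (hw : w ∈ ({[a]} + {[b]} : Language α)∗) :
    ∀ t ∈ w, t = a ∨ t = b := by
  obtain ⟨L, rfl, hL⟩ := Language.mem_kstar.1 hw
  intro t ht
  obtain ⟨y, hy, hty⟩ := List.mem_flatten.1 ht
  rcases hL y hy with rfl | rfl <;> simp_all

theorem sortedLang_le_kstar : sortedLang a b ≤ ({[a]} + {[b]})∗ := by
  unfold sortedLang
  calc ({[a]} : Language α)∗ * {[b]}∗ ≤ ({[a]} + {[b]})∗ * ({[a]} + {[b]})∗ := by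
        gcongr; exacts [le_self_add, le_add_self]
    _ = _ := kstar_mul_kstar _

theorem altLang_le_kstar : altLang a b ≤ ({[a]} + {[b]})∗ := by
  set K : Language α := ({[a]} + {[b]})∗
  have ha : ({[a]} : Language α) ≤ K := le_self_add.trans le_kstar
  have hb : ({[b]} : Language α) ≤ K := le_add_self.trans le_kstar
  calc altLang a b ≤ K∗ * (K∗ + K∗) := by
        unfold altLang
        gcongr
        calc ({[a]} : Language α) * {[b]} ≤ K * K := by gcongr
          _ = K := kstar_mul_kstar _
    _ = K := by simp only [K, kstar_idem, add_idem, kstar_mul_kstar]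

end Languages

section RankTwo

open List

variable {I : α → α → Prop} {a b c : α}

theorem exists_mem_altLang_trEq_replicate (hab : I a b) (p q : ℕ) :
    ∃ w ∈ altLang a b, TrEq I (replicate p a ++ replicate q b) w := by
  induction p generalizing q with
  | zero =>
    exact ⟨replicate q b, Language.append_mem_mul (Language.nil_mem_kstar _)
      (Or.inr (replicate_mem_kstar_singleton b q)), TrEq.refl _⟩
  | succ p ih =>
    cases q with
    | zero =>
      exact ⟨replicate (p + 1) a, Language.append_mem_mul (Language.nil_mem_kstar _)
        (Or.inl (replicate_mem_kstar_singleton a (p + 1))), by simpa using TrEq.refl _⟩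
    | succ q =>
      obtain ⟨w, hw, h⟩ := ih q
      obtain ⟨w₁, hw₁, w₂, hw₂, rfl⟩ := Language.mem_mul.1 hw
      have hab_mem : [a, b] ∈ ({[a]} * {[b]} : Language α) :=
        Language.append_mem_mul (Set.mem_singleton [a]) (Set.mem_singleton [b])
      refine ⟨[a, b] ++ w₁ ++ w₂,
        Language.append_mem_mul (Set.mem_of_subset_of_mem (mul_kstar_le_kstar (α := Language α))
          (Language.append_mem_mul hab_mem hw₁)) hw₂, ?_⟩
      have hbubble : TrEq I (replicate p a ++ b :: replicate q b)
          (b :: (replicate p a ++ replicate q b)) :=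
        TrEq.append_cons (fun x hx => by rw [eq_of_mem_replicate hx]; exact hab) _
      simpa [replicate_succ] using (hbubble.trans (h.cons b)).cons a

theorem exists_mem_altLang_trEq (hab : I a b) {w : List α} (hw : ∀ t ∈ w, t = a ∨ t = b) :
    ∃ w' ∈ altLang a b, TrEq I w w' := by
  obtain ⟨p, q, h⟩ := exists_trEq_replicate_append_replicate hab hw
  obtain ⟨w', hw', h'⟩ := exists_mem_altLang_trEq_replicate hab p q
  exact ⟨w', hw', h.trans h'⟩

theorem exists_eq_append_cons_of_mem {z : List α}
    (hz : z ∈ sortedLang a b * {[c]} * altLang a b + altLang a b * {[c]} * sortedLang a b) :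
    ∃ x y, z = x ++ c :: y ∧ (∀ t ∈ x, t = a ∨ t = b) ∧ (∀ t ∈ y, t = a ∨ t = b) := by
  have hle : sortedLang a b * {[c]} * altLang a b + altLang a b * {[c]} * sortedLang a b ≤
      ({[a]} + {[b]})∗ * {[c]} * ({[a]} + {[b]})∗ :=
    add_le (by gcongr; exacts [sortedLang_le_kstar, altLang_le_kstar])
      (by gcongr; exacts [altLang_le_kstar, sortedLang_le_kstar])
  obtain ⟨xc, hxc, y, hy, rfl⟩ := Language.mem_mul.1 (hle hz)
  obtain ⟨x, hx, _, rfl, rfl⟩ := Language.mem_mul.1 hxc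
  exact ⟨x, y, by simp, forall_mem_of_mem_kstar hx, forall_mem_of_mem_kstar hy⟩

theorem exists_mem_eqScatEqLe_of_mem_right (hab : I a b) {u x y : List α}
    (hu : ∀ t ∈ u, t = a ∨ t = b) (hx : ∀ t ∈ x, t = a ∨ t = b) (hy : ∀ t ∈ y, t = a ∨ t = b) :
    ∃ z ∈ sortedLang a b * {[c]} * altLang a b, EqScatEqLe I 2 u z (x ++ c :: y) := by
  obtain ⟨p, q, hu'⟩ := exists_trEq_replicate_append_replicate hab hu
  obtain ⟨r, s, hx'⟩ := exists_trEq_replicate_append_replicate hab hx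
  obtain ⟨w, hw, hy'⟩ := exists_mem_altLang_trEq hab hy
  refine ⟨replicate p a ++ replicate r a ++ replicate q b ++ (replicate s b ++ c :: w), ?_,
    eqScatEqLe_two hu' ?_ (windep_replicate hab r q)⟩
  · refine Language.mem_mul.2 ⟨_, Language.append_mem_mul
      (replicate_append_replicate_mem_sortedLang (p + r) (q + s)) rfl, w, hw, ?_⟩
    simp only [replicate_add, append_assoc, cons_append, nil_append]
  · simpa using (hx'.append (hy'.cons c)).symm

theorem exists_mem_eqScatEqLe_of_mem_left (hab : I a b) {x y v : List α}
    (hx : ∀ t ∈ x, t = a ∨ t = b) (hy : ∀ t ∈ y, t = a ∨ t = b) (hv : ∀ t ∈ v, t = a ∨ t = b) :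
    ∃ z ∈ altLang a b * {[c]} * sortedLang a b, EqScatEqLe I 2 (x ++ c :: y) z v := by
  obtain ⟨w, hw, hx'⟩ := exists_mem_altLang_trEq hab hx
  obtain ⟨p, q, hy'⟩ := exists_trEq_replicate_append_replicate hab hy
  obtain ⟨r, s, hv'⟩ := exists_trEq_replicate_append_replicate hab hv
  refine ⟨(w ++ c :: replicate p a) ++ replicate r a ++ replicate q b ++ replicate s b, ?_,
    eqScatEqLe_two ?_ hv'.symm (windep_replicate hab r q)⟩
  · refine Language.mem_mul.2 ⟨_, Language.append_mem_mul hw rfl, _,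
      replicate_append_replicate_mem_sortedLang (p + r) (q + s), ?_⟩
    simp only [replicate_add, append_assoc, cons_append, nil_append]
  · simpa using hx'.append (hy'.cons c)

theorem hasRankLe_two (hab : I a b) :
    HasRankLe I
      (sortedLang a b * {[c]} * altLang a b + altLang a b * {[c]} * sortedLang a b) 2 := by
  rintro u v ⟨z₀, hz₀, huv⟩
  obtain ⟨x, y, rfl, hx, hy⟩ := exists_eq_append_cons_of_mem hz₀
  have hperm := huv.perm
  have hsplit : ∀ l₁ l₂, u ++ v = l₁ ++ c :: l₂ →
      (∀ t ∈ l₁, t = a ∨ t = b) ∧ ∀ t ∈ l₂, t = a ∨ t = b := by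
    intro l₁ l₂ hl
    have h : (l₁ ++ l₂).Perm (x ++ y) :=
      (List.perm_middle.symm.trans (hl ▸ hperm)).trans List.perm_middle |>.cons_inv
    rw [← List.forall_mem_append]
    intro t ht
    rcases List.mem_append.1 (h.subset ht) with h | h
    exacts [hx t h, hy t h]
  rcases List.mem_append.1 (hperm.symm.subset (by simp) : c ∈ u ++ v) with hc | hc
  · obtain ⟨u₁, u₂, rfl⟩ := List.append_of_mem hc
    obtain ⟨hu₁, hu₂v⟩ := hsplit u₁ (u₂ ++ v) (by simp)
    rw [List.forall_mem_append] at hu₂v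
    obtain ⟨z, hz, h⟩ := exists_mem_eqScatEqLe_of_mem_left hab hu₁ hu₂v.1 hu₂v.2
    exact ⟨z, Or.inr hz, h⟩
  · obtain ⟨v₁, v₂, rfl⟩ := List.append_of_mem hc
    obtain ⟨huv₁, hv₂⟩ := hsplit (u ++ v₁) v₂ (by simp)
    rw [List.forall_mem_append] at huv₁
    obtain ⟨z, hz, h⟩ := exists_mem_eqScatEqLe_of_mem_right hab huv₁.1 huv₁.2 hv₂
    exact ⟨z, Or.inl hz, h⟩

end RankTwo

/-- over Σ = {a, b, c} with independence exactly a I b,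
E = a✶b✶c(ab)✶(a✶ + b✶) + (ab)✶(a✶ + b✶)ca✶b✶ has rank at most 2. -/
theorem stmt13 (I : Fin 3 → Fin 3 → Prop)
    (hI : ∀ x y, I x y ↔ ((x = 0 ∧ y = 1) ∨ (x = 1 ∧ y = 0)))
    (A B C : RegularExpression (Fin 3))
    (hA : A = char 0) (hB : B = char 1) (hC : C = char 2)
    (E : RegularExpression (Fin 3))
    (hE : E = plus
      (comp (comp (comp (comp (RegularExpression.star A) (RegularExpression.star B)) C)
          (RegularExpression.star (comp A B)))
        (plus (RegularExpression.star A) (RegularExpression.star B)))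
      (comp (comp (comp (RegularExpression.star (comp A B))
          (plus (RegularExpression.star A) (RegularExpression.star B))) C)
        (comp (RegularExpression.star A) (RegularExpression.star B)))) :
    HasRankLe I E.matches' 2 := by
  have hE' : E.matches' =
      sortedLang 0 1 * {[2]} * altLang 0 1 + altLang 0 1 * {[2]} * sortedLang 0 1 := by
    subst hA hB hC hE
    simp only [sortedLang, altLang, plus_def, comp_def, matches'_add, matches'_mul, matches'_star,
      matches'_char, mul_assoc]
  rw [hE']
  exact hasRankLe_two ((hI 0 1).2 (Or.inl ⟨rfl, rfl⟩))
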